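/- Let (V_I, u_{I,i}, w_{I,i}) be an object of 𝒞_n. For each I and i ∉ I let s_{I,i} : V_I → V_I be the unique linear map with spectrum contained in Σ₁ such that exp(2πi·s_{I,i}) = w_{I,i} ∘ u_{I,i} + Id, and set x_{I,i} := ψ(s_{I,i})^{−1} ∘ w_{I,i}. Then (V_I, u_{I,i}, x_{I,i}) is an object of 𝒬ui_n^{Σ₁}: the maps satisfy the hypercube commutativity conditions, and the spectra of x_{I,i} ∘ u_{I,i} and u_{I,i} ∘ x_{I,i} are contained in Σ₁. -/

import Mathlib

open Complex

noncomputable section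

/-- The set Σ: complex numbers `α` with `-1 ≤ Re α ≤ 0`, `Im α ≥ 0` if `Re α = -1`,
and `Im α < 0` if `Re α = 0`. -/
def SigmaSet : Set ℂ :=
  {α : ℂ | -1 ≤ α.re ∧ α.re ≤ 0 ∧ (α.re = -1 → 0 ≤ α.im) ∧ (α.re = 0 → α.im < 0)}

/-- The set Σ₁ := Σ + 1. -/
def Sigma1 : Set ℂ := {α : ℂ | α - 1 ∈ SigmaSet}

/-- The constant `2πi`. -/
def twoPiI : ℂ := 2 * Real.pi * Complex.I

/-- The exponential `exp(2πi·f)` of an endomorphism `f`. -/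
def expEnd {E : Type*} [NormedAddCommGroup E] [NormedSpace ℂ E] (f : E →L[ℂ] E) :
    E →L[ℂ] E :=
  NormedSpace.exp (twoPiI • f)

/-- The power series `ψ(A) := ∑_{k=1}^∞ ((2πi)^k / k!) A^(k-1)`. It satisfies
`A·ψ(A) = ψ(A)·A = exp(2πi·A) − Id`. -/
def psiEnd {E : Type*} [NormedAddCommGroup E] [NormedSpace ℂ E] (A : E →L[ℂ] E) :
    E →L[ℂ] E :=
  ∑' k : ℕ, ((twoPiI ^ (k + 1) / (Nat.factorial (k + 1) : ℂ)) • A ^ k)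

/-- Transport along an equality of index sets. -/
def castMap (V : Finset (Fin n) → Type*) [∀ I, NormedAddCommGroup (V I)]
    [∀ I, NormedSpace ℂ (V I)] {I J : Finset (Fin n)} (h : I = J) : V I →L[ℂ] V J := by
  subst h; exact ContinuousLinearMap.id ℂ (V I)

variable {n : ℕ}

/-- The data `(V_I, u_{I,i}, y_{I,i})` is a representation of the hypercube quiver:
the commutativity conditions
`u_{I∪{i},j} ∘ u_{I,i} = u_{I∪{j},i} ∘ u_{I,j}`,
`y_{I,i} ∘ y_{I∪{i},j} = y_{I,j} ∘ y_{I∪{j},i}` and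
`y_{I∪{i},j} ∘ u_{I∪{j},i} = u_{I,i} ∘ y_{I,j}` hold for all `i ≠ j` not in `I`. -/
def IsQuiRep (V : Finset (Fin n) → Type*) [∀ I, NormedAddCommGroup (V I)]
    [∀ I, NormedSpace ℂ (V I)]
    (u : ∀ (I : Finset (Fin n)) (i : Fin n), V I →L[ℂ] V (insert i I))
    (y : ∀ (I : Finset (Fin n)) (i : Fin n), V (insert i I) →L[ℂ] V I) : Prop :=
  ∀ (I : Finset (Fin n)) (i j : Fin n), i ∉ I → j ∉ I → i ≠ j →
    ((castMap V (Finset.insert_comm j i I)).comp ((u (insert i I) j).comp (u I i)) =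
      (u (insert j I) i).comp (u I j)) ∧
    ((y I i).comp (y (insert i I) j) =
      ((y I j).comp (y (insert j I) i)).comp (castMap V (Finset.insert_comm j i I))) ∧
    ((y (insert i I) j).comp ((castMap V (Finset.insert_comm i j I)).comp (u (insert j I) i)) =
      (u I i).comp (y I j))

/-- `(V_I, u_{I,i}, y_{I,i})` is an object of the category `𝒞_n`. -/
def IsCnObj (V : Finset (Fin n) → Type*) [∀ I, NormedAddCommGroup (V I)]
    [∀ I, NormedSpace ℂ (V I)]
    (u : ∀ (I : Finset (Fin n)) (i : Fin n), V I →L[ℂ] V (insert i I))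
    (y : ∀ (I : Finset (Fin n)) (i : Fin n), V (insert i I) →L[ℂ] V I) : Prop :=
  IsQuiRep V u y ∧ ∀ (I : Finset (Fin n)) (i : Fin n), i ∉ I →
    IsUnit ((u I i).comp (y I i) + ContinuousLinearMap.id ℂ (V (insert i I))) ∧
    IsUnit ((y I i).comp (u I i) + ContinuousLinearMap.id ℂ (V I))

/-- `(V_I, u_{I,i}, y_{I,i})` is an object of the category `𝒬ui_n^{Σ₁}`. -/
def IsQuiSigmaObj (V : Finset (Fin n) → Type*) [∀ I, NormedAddCommGroup (V I)]
    [∀ I, NormedSpace ℂ (V I)]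
    (u : ∀ (I : Finset (Fin n)) (i : Fin n), V I →L[ℂ] V (insert i I))
    (y : ∀ (I : Finset (Fin n)) (i : Fin n), V (insert i I) →L[ℂ] V I) : Prop :=
  IsQuiRep V u y ∧ ∀ (I : Finset (Fin n)) (i : Fin n), i ∉ I →
    spectrum ℂ ((u I i).comp (y I i)) ⊆ Sigma1 ∧
    spectrum ℂ ((y I i).comp (u I i)) ⊆ Sigma1
/-!
Write `e(A) := exp (2πi A)`, so that `e(A) = 1 + A ψ(A)`. From `e(s) = w u + 1` we get
`w u = ψ(s) s`, hence `x u = s`, whose spectrum lies in Σ₁; `u x` has the same nonzero spectrum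
and `0 ∈ Σ₁`. The hypercube relations for `(u, x)` follow from those for `(u, w)` once the maps
`ψ(s_{I,j})⁻¹` commute with the arrows `u_{I,i}`, `w_{I,i}` for `i ≠ j` and with each other. The
relations of `(u, w)` give this for `w u + 1 = e(s)`, and it descends from `e(s)` to `s` because
`e` is injective on Σ₁: if `T e(A) = e(B) T`, then `T` is fixed by `e(Δ)` for the Sylvester
operator `Δ S = S A - B S`. An integer eigenvalue `m` of `Δ` gives eigenvalues `a` of `A` and
`a - m` of `B`, which have the same exponential, so `m = 0`; thus `ψ` of the restriction of `Δ` to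
the fixed space of `e(Δ)` is invertible, and that restriction vanishes. Finally the commutation
passes from `s` to `ψ(s)` and to its inverse.
-/

open ContinuousLinearMap

section PowerSeries

variable {𝔸 𝔹 M : Type*} [NormedRing 𝔸] [NormedAlgebra ℂ 𝔸] [NormedRing 𝔹] [NormedAlgebra ℂ 𝔹]
  [NormedAddCommGroup M] [NormedSpace ℂ M]

theorem map_tsum_smul_pow_eq (Φ : 𝔸 →L[ℂ] M) (Ψ : 𝔹 →L[ℂ] M) {a : 𝔸} {b : 𝔹}
    (h : ∀ k : ℕ, Φ (a ^ k) = Ψ (b ^ k)) {c : ℕ → ℂ} (ha : Summable fun k => c k • a ^ k)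
    (hb : Summable fun k => c k • b ^ k) :
    Φ (∑' k, c k • a ^ k) = Ψ (∑' k, c k • b ^ k) := by
  simp only [Φ.map_tsum ha, Ψ.map_tsum hb, map_smul, h]

variable [CompleteSpace 𝔸] [CompleteSpace 𝔹]

theorem map_exp_eq (Φ : 𝔸 →L[ℂ] M) (Ψ : 𝔹 →L[ℂ] M) {a : 𝔸} {b : 𝔹}
    (h : ∀ k : ℕ, Φ (a ^ k) = Ψ (b ^ k)) : Φ (NormedSpace.exp a) = Ψ (NormedSpace.exp b) := by
  simp only [NormedSpace.exp_eq_tsum ℂ]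
  exact map_tsum_smul_pow_eq Φ Ψ h (NormedSpace.expSeries_summable' a)
    (NormedSpace.expSeries_summable' b)

/- `NormedSpace.exp_add_of_commute` needs a `NormedAlgebra ℚ` instance, which is not found for
operator algebras over `ℂ`. -/
theorem exp_add_of_commute' {a a' : 𝔸} (h : Commute a a') :
    NormedSpace.exp (a + a') = NormedSpace.exp a * NormedSpace.exp a' := by
  have ha : ∀ x : 𝔸, x ∈ Metric.eball 0 (NormedSpace.expSeries ℂ 𝔸).radius := fun x => by
    simp [NormedSpace.expSeries_radius_eq_top]
  exact NormedSpace.exp_add_of_commute_of_mem_ball h (ha a) (ha a')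

theorem summable_psi_series (a : 𝔸) :
    Summable fun k : ℕ => (twoPiI ^ (k + 1) / ((k + 1).factorial : ℂ)) • a ^ k := by
  refine .of_norm_bounded
    ((NormedSpace.norm_expSeries_summable' (𝕂 := ℂ) (twoPiI • a)).mul_left ‖twoPiI‖) fun k => ?_
  rw [smul_pow, smul_smul, norm_smul, norm_smul, ← mul_assoc]
  gcongr
  have hfac : (k.factorial : ℝ) ≤ (k + 1).factorial := by
    exact_mod_cast Nat.factorial_le k.le_succ
  simp only [norm_div, norm_mul, norm_inv, norm_pow, Complex.norm_natCast, pow_succ]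
  rw [← div_eq_inv_mul, mul_div_assoc', mul_comm]
  gcongr

end PowerSeries

section Intertwining

variable {E F : Type*} [NormedAddCommGroup E] [NormedSpace ℂ E] [NormedAddCommGroup F]
  [NormedSpace ℂ F]

theorem comp_pow_eq {A : E →L[ℂ] E} {B : F →L[ℂ] F} {T : E →L[ℂ] F} (h : T ∘L A = B ∘L T) :
    ∀ k : ℕ, T ∘L (A ^ k) = (B ^ k) ∘L T
  | 0 => by simp [one_def]
  | k + 1 => by
    rw [pow_succ, mul_def, ← comp_assoc, comp_pow_eq h k, comp_assoc, h, ← comp_assoc, pow_succ,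
      mul_def]

theorem comp_inverse_eq {P : E →L[ℂ] E} {Q : F →L[ℂ] F} {T : E →L[ℂ] F} (hP : IsUnit P)
    (hQ : IsUnit Q) (h : T ∘L P = Q ∘L T) : T ∘L Ring.inverse P = Ring.inverse Q ∘L T := by
  calc T ∘L Ring.inverse P = (Ring.inverse Q * Q) ∘L T ∘L Ring.inverse P := by
        rw [Ring.inverse_mul_cancel _ hQ, one_def, id_comp]
    _ = Ring.inverse Q ∘L (T ∘L (P * Ring.inverse P)) := by
        rw [mul_def, mul_def, ← comp_assoc T, h]
        simp only [comp_assoc]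
    _ = Ring.inverse Q ∘L T := by rw [Ring.mul_inverse_cancel _ hP, one_def, comp_id]

variable [CompleteSpace E] [CompleteSpace F]

theorem comp_expEnd_eq {A : E →L[ℂ] E} {B : F →L[ℂ] F} {T : E →L[ℂ] F} (h : T ∘L A = B ∘L T) :
    T ∘L expEnd A = expEnd B ∘L T :=
  map_exp_eq (compL ℂ E E F T) ((compL ℂ E F F).flip T) fun k => by
    simp [smul_pow, comp_pow_eq h k]

theorem comp_psiEnd_eq {A : E →L[ℂ] E} {B : F →L[ℂ] F} {T : E →L[ℂ] F} (h : T ∘L A = B ∘L T) :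
    T ∘L psiEnd A = psiEnd B ∘L T :=
  map_tsum_smul_pow_eq (compL ℂ E E F T) ((compL ℂ E F F).flip T) (by simp [comp_pow_eq h])
    (summable_psi_series A) (summable_psi_series B)

end Intertwining

section Endomorphisms

variable {E : Type*} [NormedAddCommGroup E] [NormedSpace ℂ E]

theorem pow_apply_of_apply_eq_smul {A : E →L[ℂ] E} {v : E} {μ : ℂ} (hv : A v = μ • v) :
    ∀ k : ℕ, (A ^ k) v = μ ^ k • v
  | 0 => by simp
  | k + 1 => by
    rw [pow_succ', mul_apply_eq_comp, pow_apply_of_apply_eq_smul hv k, map_smul, hv, smul_smul,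
      pow_succ]

variable [CompleteSpace E]

theorem expEnd_apply_of_apply_eq_smul {A : E →L[ℂ] E} {v : E} {μ : ℂ} (hv : A v = μ • v) :
    expEnd A v = cexp (twoPiI * μ) • v := by
  rw [Complex.exp_eq_exp_ℂ, ← smul_eq_mul]
  exact map_exp_eq (apply ℂ E v) ((ContinuousLinearMap.id ℂ ℂ).smulRight v) fun k => by
    simp [mul_pow, smul_pow, pow_apply_of_apply_eq_smul hv k, smul_smul]

theorem psiEnd_apply_of_apply_eq_zero {A : E →L[ℂ] E} {v : E} (hv : A v = 0) :
    psiEnd A v = twoPiI • v := by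
  have hv' : A v = (0 : ℂ) • v := by rw [hv, zero_smul]
  have := map_tsum_smul_pow_eq (apply ℂ E v) ((ContinuousLinearMap.id ℂ ℂ).smulRight v)
    (fun k => by simp [pow_apply_of_apply_eq_smul hv' k]) (summable_psi_series A)
    (summable_psi_series (0 : ℂ))
  simp only [apply_apply] at this
  unfold psiEnd
  rw [this, tsum_eq_single 0 fun k hk => by simp [hk]]
  simp

theorem expEnd_add_of_commute {A A' : E →L[ℂ] E} (h : Commute A A') :
    expEnd (A + A') = expEnd A * expEnd A' := by
  rw [expEnd, smul_add, exp_add_of_commute' ((h.smul_left twoPiI).smul_right twoPiI)]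
  rfl

theorem expEnd_neg_mul_self (A : E →L[ℂ] E) : expEnd (-A) * expEnd A = 1 := by
  rw [← expEnd_add_of_commute (Commute.refl A).neg_left, neg_add_cancel, expEnd, smul_zero,
    NormedSpace.exp_zero]

theorem commute_psiEnd (A : E →L[ℂ] E) : Commute A (psiEnd A) :=
  comp_psiEnd_eq (T := A) rfl

theorem expEnd_eq_one_add_mul_psiEnd (A : E →L[ℂ] E) : expEnd A = 1 + A * psiEnd A := by
  have hterm : ∀ k : ℕ, compL ℂ E E E A ((twoPiI ^ (k + 1) / ((k + 1).factorial : ℂ)) • A ^ k)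
      = ((k + 1).factorial : ℂ)⁻¹ • (twoPiI • A) ^ (k + 1) := fun k => by
    rw [map_smul, compL_apply, ← mul_def, ← pow_succ', smul_pow, smul_smul, div_eq_inv_mul]
  simp only [expEnd, NormedSpace.exp_eq_tsum ℂ]
  rw [(NormedSpace.expSeries_summable' (𝕂 := ℂ) (twoPiI • A)).tsum_eq_zero_add, psiEnd, mul_def,
    ← compL_apply ℂ, (compL ℂ E E E A).map_tsum (summable_psi_series A)]
  simp [hterm]

theorem inverse_psiEnd_comp_comp_eq {F : Type*} [NormedAddCommGroup F] [NormedSpace ℂ F]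
    {A : E →L[ℂ] E} {f : E →L[ℂ] F} {g : F →L[ℂ] E}
    (hA : IsUnit (psiEnd A)) (h : expEnd A = g ∘L f + ContinuousLinearMap.id ℂ E) :
    (Ring.inverse (psiEnd A) ∘L g) ∘L f = A := by
  have hgf : g ∘L f = psiEnd A * A := by
    rw [← (commute_psiEnd A).eq, ← add_right_inj 1, ← expEnd_eq_one_add_mul_psiEnd, h, add_comm]
    rfl
  rw [comp_assoc, hgf, ← mul_def, ← mul_assoc, Ring.inverse_mul_cancel _ hA, one_mul]

end Endomorphisms

section Scalars

theorem twoPiI_ne_zero : twoPiI ≠ 0 := by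
  simp [twoPiI, Real.pi_ne_zero, Complex.I_ne_zero]

theorem exp_twoPiI_mul_eq_one_iff {z : ℂ} : cexp (twoPiI * z) = 1 ↔ ∃ m : ℤ, z = m := by
  rw [Complex.exp_eq_one_iff]
  refine exists_congr fun m => ?_
  rw [twoPiI, mul_comm, mul_left_inj' (by simp [Real.pi_ne_zero, Complex.I_ne_zero])]

theorem mem_Sigma1_iff {α : ℂ} :
    α ∈ Sigma1 ↔ 0 ≤ α.re ∧ α.re ≤ 1 ∧ (α.re = 0 → 0 ≤ α.im) ∧ (α.re = 1 → α.im < 0) := by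
  simp only [Sigma1, SigmaSet, Set.mem_ofPred_eq, Complex.sub_re, Complex.sub_im, Complex.one_re,
    Complex.one_im, sub_zero]
  constructor <;> rintro ⟨h0, h1, h2, h3⟩ <;>
    exact ⟨by linarith, by linarith, fun h => h2 (by linarith), fun h => h3 (by linarith)⟩

theorem zero_mem_Sigma1 : (0 : ℂ) ∈ Sigma1 := by
  simp [mem_Sigma1_iff]

theorem eq_zero_of_intCast_mem_Sigma1 {m : ℤ} (h : (m : ℂ) ∈ Sigma1) : m = 0 := by
  obtain ⟨h0, h1, -, h1'⟩ := mem_Sigma1_iff.mp h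
  simp only [Complex.intCast_re, Complex.intCast_im] at h0 h1 h1'
  have : m ≠ 1 := by rintro rfl; simp at h1'
  have : m ≤ 1 := by exact_mod_cast h1
  have : 0 ≤ m := by exact_mod_cast h0
  omega

theorem injOn_exp_Sigma1 : Set.InjOn (fun z => cexp (twoPiI * z)) Sigma1 := by
  intro μ hμ ν hν h
  obtain ⟨m, hm⟩ := exp_twoPiI_mul_eq_one_iff.mp (show cexp (twoPiI * (μ - ν)) = 1 by
    rw [mul_sub, Complex.exp_sub, div_eq_one_iff_eq (Complex.exp_ne_zero _)]; exact h)
  rw [mem_Sigma1_iff] at hμ hν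
  have hre : μ.re = ν.re + m := by simpa [sub_eq_iff_eq_add'] using congrArg Complex.re hm
  have him : μ.im = ν.im := by simpa [sub_eq_zero] using congrArg Complex.im hm
  rcases lt_trichotomy m 0 with hm0 | rfl | hm0
  · have : (m : ℝ) ≤ -1 := by exact_mod_cast Int.le_sub_one_of_lt hm0
    linarith [hμ.2.2.1 (by linarith), hν.2.2.2 (by linarith)]
  · simpa [sub_eq_zero] using hm
  · have : (1 : ℝ) ≤ m := by exact_mod_cast hm0
    linarith [hμ.2.2.2 (by linarith), hν.2.2.1 (by linarith)]

end Scalars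

section FiniteDimensional

open Polynomial

variable {E F : Type*} [NormedAddCommGroup E] [NormedSpace ℂ E] [FiniteDimensional ℂ E]
  [NormedAddCommGroup F] [NormedSpace ℂ F] [FiniteDimensional ℂ F]

theorem mem_spectrum_iff_exists_apply_eq_smul {A : E →L[ℂ] E} {μ : ℂ} :
    μ ∈ spectrum ℂ A ↔ ∃ v, v ≠ 0 ∧ A v = μ • v := by
  rw [ContinuousLinearMap.spectrum_eq, ← Module.End.hasEigenvalue_iff_mem_spectrum]
  constructor
  · intro h
    obtain ⟨v, hv⟩ := h.exists_hasEigenvector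
    exact ⟨v, hv.2, hv.apply_eq_smul⟩
  · rintro ⟨v, hv0, hv⟩
    exact Module.End.hasEigenvalue_of_hasEigenvector ⟨Module.End.mem_eigenspace_iff.mpr hv, hv0⟩

theorem exists_apply_eq_smul_mem_of_mapsTo (A : E →L[ℂ] E) {K : Submodule ℂ E} (hK : K ≠ ⊥)
    (hAK : ∀ x ∈ K, A x ∈ K) : ∃ v ∈ K, v ≠ 0 ∧ ∃ μ : ℂ, A v = μ • v := by
  have : Nontrivial K := Submodule.nontrivial_iff_ne_bot.mpr hK
  obtain ⟨μ, hμ⟩ := Module.End.exists_eigenvalue ((A : E →ₗ[ℂ] E).restrict hAK)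
  obtain ⟨v, hv⟩ := hμ.exists_hasEigenvector
  refine ⟨v, v.2, fun h => hv.2 (Subtype.ext h), μ, ?_⟩
  simpa using congrArg Subtype.val hv.apply_eq_smul

theorem isUnit_psiEnd {A : E →L[ℂ] E} (hA : ∀ m : ℤ, (m : ℂ) ∈ spectrum ℂ A → m = 0) :
    IsUnit (psiEnd A) := by
  rw [isUnit_iff_isUnit_toLinearMap, LinearMap.isUnit_iff_ker_eq_bot]
  by_contra hK
  obtain ⟨v, hvK, hv0, μ, hAv⟩ := exists_apply_eq_smul_mem_of_mapsTo A hK fun x hx => by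
    simp only [LinearMap.mem_ker, coe_coe] at hx ⊢
    rw [← mul_apply_eq_comp, ← (commute_psiEnd A).eq, mul_apply_eq_comp, hx, map_zero]
  have hψv : psiEnd A v = 0 := hvK
  obtain ⟨m, rfl⟩ : ∃ m : ℤ, μ = m := by
    refine exp_twoPiI_mul_eq_one_iff.mp (smul_left_injective ℂ hv0 ?_)
    simp only [← expEnd_apply_of_apply_eq_smul hAv, expEnd_eq_one_add_mul_psiEnd, add_apply,
      one_apply_eq_self, mul_apply_eq_comp, hψv, map_zero, add_zero, one_smul]
  obtain rfl := hA m (mem_spectrum_iff_exists_apply_eq_smul.mpr ⟨v, hv0, hAv⟩)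
  rw [Int.cast_zero, zero_smul] at hAv
  have h2πv : twoPiI • v = 0 := by rw [← psiEnd_apply_of_apply_eq_zero hAv, hψv]
  exact hv0 ((smul_eq_zero.mp h2πv).resolve_left twoPiI_ne_zero)

theorem eq_zero_of_expEnd_eq_one {N : E →L[ℂ] E}
    (hN : ∀ m : ℤ, (m : ℂ) ∈ spectrum ℂ N → m = 0) (h : expEnd N = 1) : N = 0 := by
  rw [expEnd_eq_one_add_mul_psiEnd, add_eq_left] at h
  exact (isUnit_psiEnd hN).mul_left_eq_zero.mp h

theorem spectrum_comp_subset (f : E →L[ℂ] F) (g : F →L[ℂ] E) :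
    spectrum ℂ (f ∘L g) ⊆ insert 0 (spectrum ℂ (g ∘L f)) := by
  intro μ hμ
  rcases eq_or_ne μ 0 with rfl | hμ0
  · exact Set.mem_insert _ _
  obtain ⟨v, hv0, hv⟩ := mem_spectrum_iff_exists_apply_eq_smul.mp hμ
  refine Set.mem_insert_of_mem _
    (mem_spectrum_iff_exists_apply_eq_smul.mpr ⟨g v, fun hgv => ?_, ?_⟩)
  · rw [comp_apply, hgv, map_zero, eq_comm, smul_eq_zero] at hv
    exact hv.elim hμ0 hv0
  · simp only [comp_apply] at hv ⊢
    rw [hv, map_smul]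

theorem exists_mem_spectrum_of_comp_eq {A : E →L[ℂ] E} {B : F →L[ℂ] F} {S : E →L[ℂ] F}
    (hS : S ≠ 0) (h : S ∘L A = B ∘L S) : ∃ a ∈ spectrum ℂ A, a ∈ spectrum ℂ B := by
  set A₀ : Module.End ℂ E := (A : E →ₗ[ℂ] E)
  set B₀ : Module.End ℂ F := (B : F →ₗ[ℂ] F)
  set S₀ : E →ₗ[ℂ] F := (S : E →ₗ[ℂ] F)
  have h₀ : B₀ ∘ₗ S₀ = S₀ ∘ₗ A₀ := congrArg toLinearMap h.symm
  have hpoly : ∀ p : ℂ[X], aeval B₀ p ∘ₗ S₀ = S₀ ∘ₗ aeval A₀ p := fun p => by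
    induction p using Polynomial.induction_on' with
    | add p q hp hq => rw [map_add, map_add, LinearMap.add_comp, LinearMap.comp_add, hp, hq]
    | monomial k a =>
      rw [aeval_monomial, aeval_monomial, ← Algebra.smul_def, ← Algebra.smul_def,
        LinearMap.smul_comp, LinearMap.comp_smul, Module.End.commute_pow_left_of_commute h₀]
  set p := A₀.charpoly
  have hnu : ¬IsUnit (aeval B₀ (p.roots.map fun a => X - C a).prod) := by
    rw [← (IsAlgClosed.splits p).eq_prod_roots_of_monic (LinearMap.charpoly_monic A₀)]
    intro hu
    apply hS
    ext x
    apply (Module.End.isUnit_iff _).mp hu |>.injective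
    have := LinearMap.congr_fun (hpoly p) x
    rw [LinearMap.aeval_self_charpoly] at this
    simpa [S₀] using this
  obtain ⟨a, haB, hpa⟩ := spectrum.exists_mem_of_not_isUnit_aeval_prod hnu
  refine ⟨a, ?_, ?_⟩
  · rw [ContinuousLinearMap.spectrum_eq, Module.End.mem_spectrum_iff_isRoot_charpoly]
    exact hpa
  · rwa [ContinuousLinearMap.spectrum_eq]

end FiniteDimensional

section Sylvester

variable {E F : Type*} [NormedAddCommGroup E] [NormedSpace ℂ E] [NormedAddCommGroup F]
  [NormedSpace ℂ F]

def sylvesterOp (A : E →L[ℂ] E) (B : F →L[ℂ] F) : (E →L[ℂ] F) →L[ℂ] (E →L[ℂ] F) :=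
  (compL ℂ E E F).flip A - compL ℂ E F F B

@[simp]
theorem sylvesterOp_apply (A : E →L[ℂ] E) (B : F →L[ℂ] F) (S : E →L[ℂ] F) :
    sylvesterOp A B S = S ∘L A - B ∘L S :=
  rfl

theorem compL_pow_apply (B : F →L[ℂ] F) (S : E →L[ℂ] F) :
    ∀ k : ℕ, (compL ℂ E F F B ^ k) S = (B ^ k) ∘L S
  | 0 => by simp [one_def]
  | k + 1 => by
    rw [pow_succ', mul_apply_eq_comp, compL_pow_apply B S k, compL_apply, pow_succ', mul_def,
      comp_assoc]

theorem compL_flip_pow_apply (A : E →L[ℂ] E) (S : E →L[ℂ] F) :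
    ∀ k : ℕ, ((compL ℂ E E F).flip A ^ k) S = S ∘L (A ^ k)
  | 0 => by simp [one_def]
  | k + 1 => by
    rw [pow_succ', mul_apply_eq_comp, compL_flip_pow_apply A S k, flip_apply, compL_apply, pow_succ,
      mul_def, comp_assoc]

variable [CompleteSpace F]

theorem expEnd_compL_apply (B : F →L[ℂ] F) (S : E →L[ℂ] F) :
    expEnd (compL ℂ E F F B) S = expEnd B ∘L S := by
  rw [expEnd, expEnd, ← map_smul]
  exact map_exp_eq (apply ℂ (E →L[ℂ] F) S) ((compL ℂ E F F).flip S)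
    (a := compL ℂ E F F (twoPiI • B)) (b := twoPiI • B) fun k => compL_pow_apply (twoPiI • B) S k

variable [CompleteSpace E]

theorem expEnd_compL_flip_apply (A : E →L[ℂ] E) (S : E →L[ℂ] F) :
    expEnd ((compL ℂ E E F).flip A) S = S ∘L expEnd A := by
  rw [expEnd, expEnd, ← map_smul]
  exact map_exp_eq (apply ℂ (E →L[ℂ] F) S) (compL ℂ E E F S)
    (a := (compL ℂ E E F).flip (twoPiI • A)) (b := twoPiI • A) fun k =>
    compL_flip_pow_apply (twoPiI • A) S k

theorem expEnd_sylvesterOp_apply (A : E →L[ℂ] E) (B : F →L[ℂ] F) (S : E →L[ℂ] F) :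
    expEnd (sylvesterOp A B) S = expEnd (-B) ∘L (S ∘L expEnd A) := by
  have hcomm : Commute ((compL ℂ E E F).flip A) (compL ℂ E F F (-B)) := by
    ext S x
    rfl
  rw [sylvesterOp, sub_eq_add_neg, ← map_neg, expEnd_add_of_commute hcomm, mul_apply_eq_comp,
    expEnd_compL_apply, expEnd_compL_flip_apply, comp_assoc]

end Sylvester

section SylvesterFiniteDimensional

variable {E F X : Type*} [NormedAddCommGroup E] [NormedSpace ℂ E] [FiniteDimensional ℂ E]
  [NormedAddCommGroup F] [NormedSpace ℂ F] [FiniteDimensional ℂ F]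
  [NormedAddCommGroup X] [NormedSpace ℂ X] [FiniteDimensional ℂ X]

theorem apply_eq_zero_of_expEnd_apply_eq_self {D : X →L[ℂ] X}
    (hD : ∀ (m : ℤ) (x : X), x ≠ 0 → D x = (m : ℂ) • x → m = 0) {x : X}
    (hx : expEnd D x = x) : D x = 0 := by
  set K := LinearMap.ker ((expEnd D - 1 : X →L[ℂ] X) : X →ₗ[ℂ] X)
  have hmemK : ∀ y, y ∈ K ↔ expEnd D y = y := fun y => by
    simp [K, sub_eq_zero]
  have hDK : ∀ y ∈ K, D y ∈ K := fun y hy => by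
    rw [hmemK] at hy ⊢
    rw [← comp_apply, ← comp_expEnd_eq (T := D) rfl, comp_apply, hy]
  let N : K →L[ℂ] K := LinearMap.toContinuousLinearMap ((D : X →ₗ[ℂ] X).restrict hDK)
  have hN : K.subtypeL ∘L N = D ∘L K.subtypeL := rfl
  have hNexp : expEnd N = 1 := by
    ext y
    have := congrArg (· y) (comp_expEnd_eq hN)
    simp only [comp_apply, Submodule.subtypeL_apply] at this
    rw [this, (hmemK y).mp y.2, one_apply_eq_self]
  have hNint : ∀ m : ℤ, (m : ℂ) ∈ spectrum ℂ N → m = 0 := fun m hm => by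
    obtain ⟨y, hy0, hy⟩ := mem_spectrum_iff_exists_apply_eq_smul.mp hm
    exact hD m y (by simpa using hy0) (congrArg Subtype.val hy)
  have := congrArg (· ⟨x, (hmemK x).mpr hx⟩) (eq_zero_of_expEnd_eq_one hNint hNexp)
  exact congrArg Subtype.val this

theorem eq_zero_of_sylvesterOp_apply_eq_intCast_smul {A : E →L[ℂ] E} {B : F →L[ℂ] F}
    (hinj : Set.InjOn (fun z => cexp (twoPiI * z)) (spectrum ℂ A ∪ spectrum ℂ B)) {m : ℤ}
    {S : E →L[ℂ] F} (hS : S ≠ 0) (h : sylvesterOp A B S = (m : ℂ) • S) : m = 0 := by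
  have hSA : S ∘L A = (algebraMap ℂ (F →L[ℂ] F) m + B) ∘L S := by
    rw [sylvesterOp_apply, sub_eq_iff_eq_add] at h
    rw [h, add_comp, Algebra.algebraMap_eq_smul_one, smul_comp, one_def, id_comp]
  obtain ⟨a, haA, haB⟩ := exists_mem_spectrum_of_comp_eq hS hSA
  rw [← spectrum.singleton_add_eq, Set.singleton_add] at haB
  obtain ⟨b, hbB, rfl⟩ := haB
  have hexp : cexp (twoPiI * m) = 1 := exp_twoPiI_mul_eq_one_iff.mpr ⟨m, rfl⟩
  have := hinj (Or.inl haA) (Or.inr hbB) (by simp only [mul_add, Complex.exp_add, hexp, one_mul])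
  exact_mod_cast add_eq_right.mp this

theorem comp_eq_of_comp_expEnd_eq {A : E →L[ℂ] E} {B : F →L[ℂ] F} {T : E →L[ℂ] F}
    (hinj : Set.InjOn (fun z => cexp (twoPiI * z)) (spectrum ℂ A ∪ spectrum ℂ B))
    (h : T ∘L expEnd A = expEnd B ∘L T) : T ∘L A = B ∘L T := by
  have hT : expEnd (sylvesterOp A B) T = T := by
    rw [expEnd_sylvesterOp_apply, h, ← comp_assoc, ← mul_def, expEnd_neg_mul_self, one_def,
      id_comp]
  have := apply_eq_zero_of_expEnd_apply_eq_self
    (fun m S hS0 hS => eq_zero_of_sylvesterOp_apply_eq_intCast_smul hinj hS0 hS) hT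
  rwa [sylvesterOp_apply, sub_eq_zero] at this

end SylvesterFiniteDimensional

section Hypercube

variable {V : Finset (Fin n) → Type*} [∀ I, NormedAddCommGroup (V I)] [∀ I, NormedSpace ℂ (V I)]
  {u : ∀ (I : Finset (Fin n)) (i : Fin n), V I →L[ℂ] V (insert i I)}
  {w : ∀ (I : Finset (Fin n)) (i : Fin n), V (insert i I) →L[ℂ] V I}

theorem castMap_apply_castMap {I J : Finset (Fin n)} (h : I = J) (h' : J = I) (x : V I) :
    castMap V h' (castMap V h x) = x := by
  subst h
  rfl

variable (V u w) in
def IsCompatibleFamily (M : ∀ (I : Finset (Fin n)) (_ : Fin n), V I →L[ℂ] V I) : Prop :=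
  ∀ (I : Finset (Fin n)) (i j : Fin n), i ∉ I → j ∉ I → i ≠ j →
    u I i ∘L M I j = M (insert i I) j ∘L u I i ∧
    w I i ∘L M (insert i I) j = M I j ∘L w I i ∧
    M I i ∘L M I j = M I j ∘L M I i

theorem IsQuiRep.isCompatibleFamily_comp (hrep : IsQuiRep V u w) :
    IsCompatibleFamily V u w fun I i => w I i ∘L u I i := by
  intro I i j hi hj hij
  obtain ⟨Ru, Rw, Rm⟩ := hrep I i j hi hj hij
  obtain ⟨-, -, Rm'⟩ := hrep I j i hj hi hij.symm
  have hu : ∀ z, u I i (w I j (u I j z)) = w (insert i I) j (u (insert i I) j (u I i z)) :=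
    fun z => by
      have hRm := DFunLike.congr_fun Rm (u I j z)
      have hRu := DFunLike.congr_fun Ru z
      simp only [comp_apply] at hRm hRu
      rw [← hRm, ← hRu, castMap_apply_castMap]
  have hw : ∀ z, w I i (w (insert i I) j (u (insert i I) j z)) = w I j (u I j (w I i z)) :=
    fun z => by
      have hRw := DFunLike.congr_fun Rw (u (insert i I) j z)
      have hRm' := DFunLike.congr_fun Rm' z
      simp only [comp_apply] at hRw hRm'
      rw [hRw, hRm']
  refine ⟨ext fun z => hu z, ext fun z => hw z, ext fun z => ?_⟩
  simp only [comp_apply]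
  rw [hu, hw]

theorem IsCompatibleFamily.of_intertwine
    {M M' : ∀ (I : Finset (Fin n)) (_ : Fin n), V I →L[ℂ] V I} (hM : IsCompatibleFamily V u w M)
    (h : ∀ (I J : Finset (Fin n)) (i j : Fin n) (T : V I →L[ℂ] V J), i ∉ I → j ∉ J →
      T ∘L M I i = M J j ∘L T → T ∘L M' I i = M' J j ∘L T) :
    IsCompatibleFamily V u w M' := by
  intro I i j hi hj hij
  obtain ⟨hu, hw, hcomm⟩ := hM I i j hi hj hij
  have hj' : j ∉ insert i I := by simp [hij.symm, hj]
  have hcomm' := h I I j j (M I i) hj hj hcomm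
  exact ⟨h _ _ _ _ _ hj hj' hu, h _ _ _ _ _ hj' hj hw, (h I I i i (M' I j) hi hi hcomm'.symm).symm⟩

theorem IsQuiRep.twist {M : ∀ (I : Finset (Fin n)) (_ : Fin n), V I →L[ℂ] V I}
    (hrep : IsQuiRep V u w) (hM : IsCompatibleFamily V u w M) :
    IsQuiRep V u fun I i => M I i ∘L w I i := by
  intro I i j hi hj hij
  obtain ⟨Ru, Rw, Rm⟩ := hrep I i j hi hj hij
  obtain ⟨hu, hwi, hcomm⟩ := hM I i j hi hj hij
  obtain ⟨-, hwj, -⟩ := hM I j i hj hi hij.symm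
  refine ⟨Ru, ext fun z => ?_, ?_⟩
  · have hRw := DFunLike.congr_fun Rw z
    have hwi_z := DFunLike.congr_fun hwi (w (insert i I) j z)
    have hwj_z := DFunLike.congr_fun hwj
      (w (insert j I) i (castMap V (Finset.insert_comm j i I) z))
    have hcomm_z := DFunLike.congr_fun hcomm (w I i (w (insert i I) j z))
    simp only [comp_apply] at hRw hwi_z hwj_z hcomm_z ⊢
    rw [hwi_z, hcomm_z, hRw, hwj_z]
  · rw [comp_assoc, Rm, ← comp_assoc, ← hu, comp_assoc]

end Hypercube

/-- If `(V_I, u_{I,i}, w_{I,i})` is an object of `𝒞_n` and `s_{I,i}` is the unique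
endomorphism with spectrum in Σ₁ and `exp(2πi·s_{I,i}) = w_{I,i} ∘ u_{I,i} + Id`, then
setting `x_{I,i} := ψ(s_{I,i})⁻¹ ∘ w_{I,i}` yields an object `(V_I, u_{I,i}, x_{I,i})`
of `𝒬ui_n^{Σ₁}`. -/
theorem G_well_defined {n : ℕ} (V : Finset (Fin n) → Type*)
    [∀ I, NormedAddCommGroup (V I)] [∀ I, NormedSpace ℂ (V I)]
    [∀ I, FiniteDimensional ℂ (V I)]
    (u : ∀ (I : Finset (Fin n)) (i : Fin n), V I →L[ℂ] V (insert i I))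
    (w : ∀ (I : Finset (Fin n)) (i : Fin n), V (insert i I) →L[ℂ] V I)
    (h : IsCnObj V u w)
    (s : ∀ (I : Finset (Fin n)) (i : Fin n), V I →L[ℂ] V I)
    (hs : ∀ (I : Finset (Fin n)) (i : Fin n), i ∉ I →
      spectrum ℂ (s I i) ⊆ Sigma1 ∧
      expEnd (s I i) = (w I i).comp (u I i) + ContinuousLinearMap.id ℂ (V I)) :
    IsQuiSigmaObj V u (fun I i => (Ring.inverse (psiEnd (s I i))).comp (w I i)) := by
  obtain ⟨hrep, -⟩ := h
  have hunit : ∀ I i, i ∉ I → IsUnit (psiEnd (s I i)) := fun I i hi =>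
    isUnit_psiEnd fun m hm => eq_zero_of_intCast_mem_Sigma1 ((hs I i hi).1 hm)
  have hs_compat : IsCompatibleFamily V u w s :=
    hrep.isCompatibleFamily_comp.of_intertwine fun I J i j T hi hj hT =>
      comp_eq_of_comp_expEnd_eq
        (injOn_exp_Sigma1.mono (Set.union_subset (hs I i hi).1 (hs J j hj).1))
        (by rw [(hs I i hi).2, (hs J j hj).2, comp_add, add_comp, hT, comp_id, id_comp])
  have hψ_compat : IsCompatibleFamily V u w fun I i => Ring.inverse (psiEnd (s I i)) :=
    hs_compat.of_intertwine fun I J i j T hi hj hT =>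
      comp_inverse_eq (hunit I i hi) (hunit J j hj) (comp_psiEnd_eq hT)
  refine ⟨hrep.twist hψ_compat, fun I i hi => ?_⟩
  have hxu := inverse_psiEnd_comp_comp_eq (hunit I i hi) (hs I i hi).2
  refine ⟨fun μ hμ => ?_, hxu ▸ (hs I i hi).1⟩
  rcases spectrum_comp_subset _ _ hμ with rfl | hμ
  · exact zero_mem_Sigma1
  · exact (hs I i hi).1 (hxu ▸ hμ)
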